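/- For $p \in [0, 3/4]$ and natural $k \geq 1$: $(1-p)^{8k} - (1 - \tfrac{4}{3}p)^{6k} < \tfrac{1}{3k}$. -/
import Mathlib

lemma pow_sub_pow_le_aux (a b : ℝ) (ha : 0 ≤ a) (hb : 0 ≤ b) (hba : b ≤ a) :
    ∀ n : ℕ, a ^ (n + 1) - b ^ (n + 1) ≤ (n + 1 : ℝ) * a ^ n * (a - b) := by
  intro n
  induction n with
  | zero => simp
  | succ n ih =>
    have hbn : b ^ (n + 1) ≤ a ^ (n + 1) := pow_le_pow_left₀ hb hba _
    have han : 0 ≤ a ^ (n + 1) := pow_nonneg ha _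
    have hkey : a ^ (n + 2) - b ^ (n + 2)
        = a * (a ^ (n + 1) - b ^ (n + 1)) + b ^ (n + 1) * (a - b) := by ring
    have h1 : a * (a ^ (n + 1) - b ^ (n + 1)) ≤ a * ((n + 1 : ℝ) * a ^ n * (a - b)) :=
      mul_le_mul_of_nonneg_left ih ha
    have h2 : b ^ (n + 1) * (a - b) ≤ a ^ (n + 1) * (a - b) :=
      mul_le_mul_of_nonneg_right hbn (by linarith)
    have : a * ((n + 1 : ℝ) * a ^ n * (a - b)) = (n + 1 : ℝ) * a ^ (n + 1) * (a - b) := by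
      ring
    push_cast
    nlinarith [h1, h2]

lemma bern_bound (t : ℝ) (h0 : 0 ≤ t) (h1 : t ≤ 1) (j : ℕ) :
    ((j : ℝ) + 1) * (t * (1 - t) ^ j) ≤ 1 := by
  have hA : (1 - t) ^ j * (1 + t) ^ j ≤ 1 := by
    rw [← mul_pow]
    apply pow_le_one₀ (by nlinarith) (by nlinarith)
  have hB : 1 + (j : ℝ) * t ≤ (1 + t) ^ j := one_add_mul_le_pow (by linarith) j
  have hC : 0 ≤ (1 - t) ^ j := pow_nonneg (by linarith) j
  have hD : (1 - t) ^ j * (1 + (j : ℝ) * t) ≤ 1 := by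
    calc (1 - t) ^ j * (1 + (j : ℝ) * t) ≤ (1 - t) ^ j * (1 + t) ^ j :=
          mul_le_mul_of_nonneg_left hB hC
      _ ≤ 1 := hA
  have hE : ((j : ℝ) + 1) * t ≤ 1 + (j : ℝ) * t := by nlinarith
  nlinarith [mul_le_mul_of_nonneg_right hE hC]

theorem gap_bound_8k (k : ℕ) (hk : 1 ≤ k) (p : ℝ)
    (hp0 : 0 ≤ p) (hp1 : p ≤ 3 / 4) :
    (1 - p) ^ (8 * k) - (1 - 4 / 3 * p) ^ (6 * k) < 1 / (3 * (k : ℝ)) := by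
  have hkR : (1 : ℝ) ≤ (k : ℝ) := by exact_mod_cast hk
  set a : ℝ := (1 - p) ^ 4 with ha_def
  set b : ℝ := (1 - 4 / 3 * p) ^ 3 with hb_def
  have hq0 : 0 ≤ 1 - p := by linarith
  have hr0 : 0 ≤ 1 - 4 / 3 * p := by linarith
  have ha : 0 ≤ a := pow_nonneg hq0 4
  have hb : 0 ≤ b := pow_nonneg hr0 3
  have hba : b ≤ a := by
    simp only [ha_def, hb_def]
    nlinarith [sq_nonneg (p - 22 / 27), sq_nonneg p]
  have hgap : a - b ≤ 2 / 3 * p ^ 2 := by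
    simp only [ha_def, hb_def]
    nlinarith [pow_nonneg hp0 3, sq_nonneg p]
  obtain ⟨m, hm⟩ : ∃ m : ℕ, 2 * k = m + 1 := ⟨2 * k - 1, by omega⟩
  have h8 : (1 - p) ^ (8 * k) = a ^ (m + 1) := by
    rw [ha_def, ← pow_mul]; congr 1; omega
  have h6 : (1 - 4 / 3 * p) ^ (6 * k) = b ^ (m + 1) := by
    rw [hb_def, ← pow_mul]; congr 1; omega
  rw [h8, h6]
  have hmain := pow_sub_pow_le_aux a b ha hb hba m
  -- a ^ m = ((1-p)^(2*m))^2
  have ham : a ^ m = ((1 - p) ^ (2 * m)) ^ 2 := by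
    rw [ha_def, ← pow_mul, ← pow_mul]; congr 1; ring
  have hbern := bern_bound p hp0 (by linarith) (2 * m)
  have hj : ((2 * m : ℕ) : ℝ) + 1 = 4 * (k : ℝ) - 1 := by
    push_cast
    have : (m : ℝ) = 2 * (k : ℝ) - 1 := by
      have : ((2 * k : ℕ) : ℝ) = ((m + 1 : ℕ) : ℝ) := by rw [hm]
      push_cast at this; linarith
    linarith
  rw [hj] at hbern
  -- p * (1-p)^(2m) ≤ 1/(4k-1) ≤ 1/(3k)
  have hP0 : 0 ≤ p * (1 - p) ^ (2 * m) := mul_nonneg hp0 (pow_nonneg hq0 _)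
  have h4k : (3 : ℝ) * k ≤ 4 * (k : ℝ) - 1 := by linarith
  have hPk : p * (1 - p) ^ (2 * m) ≤ 1 / (3 * (k : ℝ)) := by
    rw [div_eq_inv_mul, le_inv_mul_iff₀ (by linarith)]
    calc 3 * (k : ℝ) * (p * (1 - p) ^ (2 * m))
        ≤ (4 * (k : ℝ) - 1) * (p * (1 - p) ^ (2 * m)) :=
          mul_le_mul_of_nonneg_right h4k hP0
      _ ≤ 1 := hbern
  have hPsq : (p * (1 - p) ^ (2 * m)) ^ 2 ≤ (1 / (3 * (k : ℝ))) ^ 2 := by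
    apply pow_le_pow_left₀ hP0 hPk
  have hmR : ((m : ℝ) + 1) = 2 * (k : ℝ) := by
    have : ((2 * k : ℕ) : ℝ) = ((m + 1 : ℕ) : ℝ) := by rw [hm]
    push_cast at this; linarith
  have hgap0 : 0 ≤ a - b := by linarith
  have ham0 : 0 ≤ a ^ m := pow_nonneg ha m
  calc a ^ (m + 1) - b ^ (m + 1)
      ≤ ((m : ℝ) + 1) * a ^ m * (a - b) := hmain
    _ = 2 * (k : ℝ) * a ^ m * (a - b) := by rw [hmR]
    _ ≤ 2 * (k : ℝ) * a ^ m * (2 / 3 * p ^ 2) := by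
        apply mul_le_mul_of_nonneg_left hgap
        positivity
    _ = 4 / 3 * (k : ℝ) * (p ^ 2 * a ^ m) := by ring
    _ = 4 / 3 * (k : ℝ) * (p * (1 - p) ^ (2 * m)) ^ 2 := by rw [ham]; ring
    _ ≤ 4 / 3 * (k : ℝ) * (1 / (3 * (k : ℝ))) ^ 2 := by
        apply mul_le_mul_of_nonneg_left hPsq
        positivity
    _ = 4 / (27 * (k : ℝ)) := by field_simp; ring
    _ < 1 / (3 * (k : ℝ)) := by
        rw [div_lt_div_iff₀ (by linarith) (by linarith)]
        nlinarith
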